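/- arXiv:2405.17646 — 2 statements merged into one kernel-verified Lean document; each statement's English description precedes it below -/
import Mathlib

section
/- Let P be a finite poset and α a minimal, non-maximal element of P. Then the number of maximal chains of P equals the number of maximal chains of P \ α plus Σ_{i=1}^s uc(β_i), where β_1,...,β_s are the elements covering α that cover at least two elements of P, and uc(v) is the number of saturated chains from v to a maximal element of P. -/
open Classical

variable {α : Type*}

/-- A saturated chain from `v` up to a maximal element: a list `v = v₀ ⋖ v₁ ⋖ … ⋖ vₖ`
with `vₖ` maximal. -/
def UpChain [PartialOrder α] (v : α) (l : List α) : Prop :=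
  l.Chain' (· ⋖ ·) ∧ l.head? = some v ∧ ∃ m, l.getLast? = some m ∧ IsMax m

/-- A saturated chain from a minimal element up to `v`. -/
def DownChain [PartialOrder α] (v : α) (l : List α) : Prop :=
  l.Chain' (· ⋖ ·) ∧ (∃ m, l.head? = some m ∧ IsMin m) ∧ l.getLast? = some v

/-- `uc v` : the number of saturated chains from `v` up to a maximal element. -/
noncomputable def uc [PartialOrder α] (v : α) : ℕ := Nat.card {l : List α // UpChain v l}

/-- `dc v` : the number of saturated chains from `v` down to a minimal element. -/
noncomputable def dc [PartialOrder α] (v : α) : ℕ := Nat.card {l : List α // DownChain v l}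

/-- A maximal chain: a saturated chain from a minimal element to a maximal element. -/
def IsMaxChainList [PartialOrder α] (l : List α) : Prop :=
  l.Chain' (· ⋖ ·) ∧ (∃ m, l.head? = some m ∧ IsMin m) ∧ ∃ m, l.getLast? = some m ∧ IsMax m

/-- `c(P)`: the number of maximal chains. -/
noncomputable def numMaxChains (α : Type*) [PartialOrder α] : ℕ :=
  Nat.card {l : List α // IsMaxChainList l}

/-- `max(P)`: the number of maximal elements. -/
noncomputable def numMax (α : Type*) [PartialOrder α] : ℕ := Nat.card {v : α // IsMax v}

/-- `min(P)`: the number of minimal elements. -/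
noncomputable def numMin (α : Type*) [PartialOrder α] : ℕ := Nat.card {v : α // IsMin v}

/-- `edges(P)`: the number of cover relations (edges of the Hasse diagram). -/
noncomputable def numEdges (α : Type*) [PartialOrder α] : ℕ :=
  Nat.card {p : α × α // p.1 ⋖ p.2}

/-- `gap(P) = c(P) + |P| - (max(P) + min(P) + edges(P))`. -/
noncomputable def gap (α : Type*) [PartialOrder α] : ℤ :=
  (numMaxChains α : ℤ) + Nat.card α - ((numMax α : ℤ) + numMin α + numEdges α)

/-- The crossing number `(uc(v)-1)(dc(v)-1)` of `v`. -/
noncomputable def crossingNumber [PartialOrder α] (v : α) : ℕ := (uc v - 1) * (dc v - 1)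

/-- `c` is the center of an X-shaped subposet: there are `a, b < c < d, e`
with `a ∥ b` and `d ∥ e`. -/
def IsXCenter [PartialOrder α] (c : α) : Prop :=
  ∃ a b d e : α, a < c ∧ b < c ∧ c < d ∧ c < e ∧
    ¬ a ≤ b ∧ ¬ b ≤ a ∧ ¬ d ≤ e ∧ ¬ e ≤ d

/-- `P` contains an X-shaped subposet. -/
def HasX (α : Type*) [PartialOrder α] : Prop := ∃ c : α, IsXCenter c


/-!
Grouping maximal chains by their least element gives `c(Q) = ∑ uc m` over the minimal `m` of any
finite poset `Q`. In `P`, the summand `uc α` splits along the covers of `α` into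
`∑ uc βᵢ + ∑ uc γⱼ`. Removing the minimal element `α` leaves an upper set, so saturated chains
starting there and their `uc`-values are unchanged, and the minimal elements of `P \ α` are those
of `P` other than `α` together with the `γⱼ`.
-/

open Finset

lemma Nat.card_exists_eq_sum_of_unique {ι X : Type*} [Fintype ι] (R : ι → X → Prop)
    [∀ i, Finite {x // R i x}] (huniq : ∀ i j x, R i x → R j x → i = j) :
    Nat.card {x // ∃ i, R i x} = ∑ i, Nat.card {x // R i x} := by
  rw [← Nat.card_sigma]
  refine (Nat.card_congr (.ofBijective (fun y : Σ i, {x // R i x} => ⟨y.2.1, y.1, y.2.2⟩)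
    ⟨?_, fun ⟨x, i, hx⟩ => ⟨⟨i, x, hx⟩, rfl⟩⟩)).symm
  rintro ⟨i, x, hx⟩ ⟨j, y, hy⟩ hxy
  obtain rfl : x = y := congrArg Subtype.val hxy
  obtain rfl := huniq i j x hx hy
  rfl

section Chains

variable {P : Type*} [PartialOrder P]

lemma List.IsChain.pairwise_lt_of_covBy {l : List P} (h : l.IsChain (· ⋖ ·)) :
    l.Pairwise (· < ·) :=
  List.isChain_iff_pairwise.mp (h.imp fun _ _ hc => hc.lt)

lemma finite_setOf_isChain_covBy [Finite P] : {l : List P | l.IsChain (· ⋖ ·)}.Finite := by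
  have := Fintype.ofFinite P
  exact (List.finite_length_le P (Fintype.card P)).subset fun l hl =>
    hl.pairwise_lt_of_covBy.nodup.length_le_card

namespace UpChain

variable {v w x : P} {l : List P}

lemma eq_of_upChain (h : UpChain v l) (h' : UpChain w l) : v = w :=
  Option.some_inj.mp (h.2.1.symm.trans h'.2.1)

lemma le_of_mem (h : UpChain v l) (hx : x ∈ l) : v ≤ x := by
  obtain ⟨hc, hh, -⟩ := h
  obtain ⟨t, rfl⟩ := List.head?_eq_some_iff.mp hh
  rcases List.mem_cons.mp hx with rfl | hx
  · exact le_rfl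
  · exact (List.rel_of_pairwise_cons hc.pairwise_lt_of_covBy hx).le

instance [Finite P] (q : Prop) (v : P) : Finite {l : List P // q ∧ UpChain v l} :=
  (finite_setOf_isChain_covBy.subset fun _ hl => hl.2.1).to_subtype

end UpChain

lemma upChain_cons_iff {v : P} (hv : ¬ IsMax v) {t : List P} :
    UpChain v (v :: t) ↔ ∃ w, v ⋖ w ∧ UpChain w t := by
  constructor
  · rintro ⟨hc, -, m, hm, hmax⟩
    cases t with
    | nil =>
      obtain rfl : v = m := Option.some_inj.mp hm
      exact absurd hmax hv
    | cons w t =>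
      obtain ⟨hvw, hc⟩ := List.isChain_cons_cons.mp hc
      exact ⟨w, hvw, hc, rfl, m, by rwa [List.getLast?_cons_cons] at hm, hmax⟩
  · rintro ⟨w, hvw, hc, hh, m, hm, hmax⟩
    obtain ⟨t, rfl⟩ := List.head?_eq_some_iff.mp hh
    exact ⟨List.isChain_cons_cons.mpr ⟨hvw, hc⟩, rfl, m,
      by rwa [List.getLast?_cons_cons], hmax⟩

lemma card_exists_upChain [Fintype P] (q : P → Prop) :
    Nat.card {l : List P // ∃ w, q w ∧ UpChain w l} = ∑ w ∈ univ.filter q, uc w := by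
  rw [Nat.card_exists_eq_sum_of_unique (fun w l => q w ∧ UpChain w l)
      fun v w l hv hw => hv.2.eq_of_upChain hw.2,
    sum_filter]
  refine sum_congr rfl fun w _ => ?_
  by_cases hw : q w <;> simp [hw, uc]

lemma numMaxChains_eq_sum_uc [Fintype P] :
    numMaxChains P = ∑ m ∈ (univ : Finset P).filter IsMin, uc m := by
  rw [← card_exists_upChain (IsMin : P → Prop)]
  refine Nat.card_congr (.subtypeEquivRight fun l => ?_)
  constructor
  · rintro ⟨hc, ⟨m, hm, hmin⟩, hlast⟩
    exact ⟨m, hmin, hc, hm, hlast⟩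
  · rintro ⟨m, hmin, hc, hm, hlast⟩
    exact ⟨hc, ⟨m, hm, hmin⟩, hlast⟩

lemma uc_eq_sum_uc_covBy [Fintype P] {v : P} (hv : ¬ IsMax v) :
    uc v = ∑ w ∈ univ.filter (v ⋖ ·), uc w := by
  rw [← card_exists_upChain (v ⋖ ·)]
  calc uc v = Nat.card {t : List P // UpChain v (v :: t)} :=
        Nat.card_congr
          { toFun l := ⟨l.1.tail, by rw [List.cons_head?_tail l.2.2.1]; exact l.2⟩
            invFun t := ⟨v :: t.1, t.2⟩
            left_inv l := Subtype.ext (List.cons_head?_tail l.2.2.1)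
            right_inv _ := rfl }
    _ = _ := by simp_rw [upChain_cons_iff hv]

end Chains

section UpperSet

variable {P : Type*} [PartialOrder P] {p : P → Prop}

lemma Set.OrdConnected.coe_covBy_coe (hp : {x | p x}.OrdConnected) {x y : {x // p x}} :
    (x : P) ⋖ y ↔ x ⋖ y :=
  Set.OrdConnected.apply_covBy_apply_iff (OrderEmbedding.subtype p) (by simpa using hp)

namespace IsUpperSet

lemma isMax_coe (hp : IsUpperSet {x | p x}) {x : {x // p x}} : IsMax (x : P) ↔ IsMax x :=
  ⟨fun h _ hy => h hy, fun h y hy => h (show x ≤ ⟨y, hp hy x.2⟩ from hy)⟩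

lemma upChain_map_val_iff (hp : IsUpperSet {x | p x}) {x : {x // p x}} {l : List {x // p x}} :
    UpChain (x : P) (l.map Subtype.val) ↔ UpChain x l := by
  refine and_congr ?_ (and_congr ?_ ?_)
  · exact (List.isChain_map Subtype.val).trans
      (by simp only [hp.ordConnected.coe_covBy_coe]; exact Iff.rfl)
  · simp only [List.head?_map, Option.map_eq_some_iff, Subtype.val_inj, exists_eq_right]
  · simp only [List.getLast?_map, Option.map_eq_some_iff]
    constructor
    · rintro ⟨_, ⟨m, hm, rfl⟩, hmax⟩
      exact ⟨m, hm, hp.isMax_coe.1 hmax⟩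
    · rintro ⟨m, hm, hmax⟩
      exact ⟨m, ⟨m, hm, rfl⟩, hp.isMax_coe.2 hmax⟩

lemma uc_coe (hp : IsUpperSet {x | p x}) (x : {x // p x}) : uc (x : P) = uc x := by
  refine (Nat.card_congr (.ofBijective
    (fun l => ⟨l.1.map Subtype.val, hp.upChain_map_val_iff.2 l.2⟩) ⟨?_, ?_⟩)).symm
  · intro l l' h
    exact Subtype.ext (List.map_injective_iff.2 Subtype.val_injective (congrArg Subtype.val h))
  · rintro ⟨l, hl⟩
    lift l to List {x // p x} using fun y hy => hp (hl.le_of_mem hy) x.2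
    exact ⟨⟨l, hp.upChain_map_val_iff.1 hl⟩, rfl⟩

end IsUpperSet

end UpperSet

section DeleteMinimal

variable {P : Type*} [PartialOrder P] {a : P}

lemma isMin_subtype_ne_iff [IsStronglyCoatomic P] (ha : IsMin a) {x : P} (hx : x ≠ a) :
    IsMin (⟨x, hx⟩ : {x // x ≠ a}) ↔ IsMin x ∨ a ⋖ x ∧ ¬ ∃ c, c ≠ a ∧ c ⋖ x := by
  constructor
  · intro hmin
    have below : ∀ z, z < x → z = a := fun z hz => by_contra fun hza =>
      (hmin (show (⟨z, hza⟩ : {x // x ≠ a}) ≤ ⟨x, hx⟩ from hz.le)).not_gt hz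
    refine or_iff_not_imp_left.2 fun hxmin => ?_
    obtain ⟨z, hz⟩ := not_isMin_iff.1 hxmin
    obtain rfl := below z hz
    exact ⟨⟨hz, fun c hzc hcx => (below c hcx ▸ hzc).false⟩,
      fun ⟨c, hca, hcx⟩ => hca (below c hcx.lt)⟩
  · rintro (hmin | ⟨-, hno⟩) z hz
    · exact hmin hz
    · rcases (show (z : P) ≤ x from hz).eq_or_lt with h | h
      · exact (Subtype.ext h).ge
      · obtain ⟨c, hzc, hcx⟩ := exists_le_covBy_of_lt h
        obtain rfl : c = a := by_contra fun hca => hno ⟨c, hca, hcx⟩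
        exact absurd (ha.eq_of_le hzc) z.2

lemma numMaxChains_subtype_ne [Fintype P] (ha : IsMin a) :
    numMaxChains {x // x ≠ a} = ∑ x ∈ (univ.filter IsMin).erase a, uc x +
      ∑ x ∈ univ.filter (fun x => a ⋖ x ∧ ¬ ∃ c, c ≠ a ∧ c ⋖ x), uc x := by
  have hup : IsUpperSet {x | x ≠ a} := fun x y hxy hx hy => hx (ha.eq_of_le (hy ▸ hxy))
  have hmins : ((univ : Finset {x // x ≠ a}).filter IsMin).map (.subtype _) =
      (univ.filter IsMin).erase a ∪ univ.filter (fun x => a ⋖ x ∧ ¬ ∃ c, c ≠ a ∧ c ⋖ x) := by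
    ext x
    by_cases hx : x = a
    · subst hx
      simp
    · simp [hx, isMin_subtype_ne_iff ha hx]
  have hdisj : Disjoint ((univ.filter IsMin).erase a)
      (univ.filter (fun x => a ⋖ x ∧ ¬ ∃ c, c ≠ a ∧ c ⋖ x)) :=
    disjoint_left.2 fun x hmin hγ => (mem_filter.1 (mem_of_mem_erase hmin)).2.not_lt
      (mem_filter.1 hγ).2.1.lt
  rw [numMaxChains_eq_sum_uc, ← sum_union hdisj, ← hmins, sum_map]
  exact sum_congr rfl fun x _ => (hup.uc_coe x).symm

end DeleteMinimal

theorem maxChains_deletion (α : Type*) [Fintype α] [PartialOrder α] (a : α)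
    (hmin : IsMin a) (hmax : ¬ IsMax a) :
    numMaxChains α =
      numMaxChains {x : α // x ≠ a} +
        ∑ b ∈ Finset.univ.filter (fun b : α => a ⋖ b ∧ ∃ c, c ≠ a ∧ c ⋖ b), uc b := by
  have hsplit := sum_filter_add_sum_filter_not (univ.filter (a ⋖ ·))
    (fun b => ∃ c, c ≠ a ∧ c ⋖ b) uc
  rw [filter_filter, filter_filter] at hsplit
  rw [numMaxChains_eq_sum_uc, ← add_sum_erase _ uc (mem_filter.2 ⟨mem_univ a, hmin⟩),
    uc_eq_sum_uc_covBy hmax, ← hsplit, numMaxChains_subtype_ne hmin]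
  ring
end

section
/- A finite poset P contains an X-shaped subposet (five distinct elements a,b,c,d,e with a < c, b < c, c < d, c < e, where a,b are incomparable and d,e are incomparable) if and only if there exists an element v ∈ P with uc(v) ≥ 2 and dc(v) ≥ 2, where uc(v) and dc(v) are the numbers of saturated chains from v up to a maximal element and down to a minimal element of P. -/
open Classical

variable {α : Type*}

/-!
In a finite poset, `uc v ≥ 2` exactly when the elements above `v` are not totally ordered.
Two distinct saturated chains from `v` to maximal elements agree up to some element `w` and then
pass through two different covers of `w`; covers of the same element are comparable only if
equal, so these are incomparable. Conversely, saturated chains through two incomparable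
elements above `v` cannot coincide. Dually, `dc v ≥ 2` exactly when the elements below `v` are
not totally ordered, and an X-shaped subposet is centred exactly at an element with both
properties.
-/

theorem not_isChain_iff_exists_incompRel {r : α → α → Prop} [Std.Refl r] {s : Set α} :
    ¬ IsChain r s ↔ ∃ x ∈ s, ∃ y ∈ s, IncompRel r x y := by
  simp only [IsChain, Set.Pairwise, not_forall, exists_prop, ← not_symmGen_iff]
  constructor
  · rintro ⟨x, hx, y, hy, -, h⟩; exact ⟨x, hx, y, hy, h⟩
  · rintro ⟨x, hx, y, hy, h⟩; exact ⟨x, hx, y, hy, (not_symmGen_iff.1 h).ne, h⟩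

theorem isChain_Ioi_toDual_iff [Preorder α] {v : α} :
    IsChain (· ≤ ·) (Set.Ioi (OrderDual.toDual v)) ↔ IsChain (· ≤ ·) (Set.Iio v) :=
  ⟨IsChain.symm, IsChain.symm⟩

section UpChain

variable [PartialOrder α] {v : α} {l l₁ l₂ : List α}

theorem not_upChain_nil : ¬ UpChain v [] := by
  simp [UpChain]

theorem upChain_singleton_iff {a : α} : UpChain v [a] ↔ a = v ∧ IsMax v := by
  simp only [UpChain, List.Chain', List.isChain_singleton, List.head?_cons, Option.some.injEq,
    List.getLast?_singleton, exists_eq_left', true_and]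
  constructor
  · rintro ⟨rfl, h⟩; exact ⟨rfl, h⟩
  · rintro ⟨rfl, h⟩; exact ⟨rfl, h⟩

theorem upChain_cons_cons_iff {a b : α} :
    UpChain v (a :: b :: l) ↔ a = v ∧ v ⋖ b ∧ UpChain b (b :: l) := by
  simp only [UpChain, List.Chain', List.isChain_cons_cons, List.head?_cons, Option.some.injEq,
    List.getLast?_cons_cons, true_and]
  constructor
  · rintro ⟨⟨hab, hc⟩, rfl, hm⟩; exact ⟨rfl, hab, hc, hm⟩
  · rintro ⟨rfl, hab, hc, hm⟩; exact ⟨⟨hab, hc⟩, rfl, hm⟩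

theorem UpChain.cons {u : α} (hl : UpChain u l) (hvu : v ⋖ u) : UpChain v (v :: l) := by
  match l, hl with
  | [], hl => exact (not_upChain_nil hl).elim
  | a :: t, hl =>
    obtain rfl : a = u := Option.some.inj hl.2.1
    exact upChain_cons_cons_iff.2 ⟨rfl, hvu, hl⟩

theorem UpChain.pairwise_lt (h : UpChain v l) : l.Pairwise (· < ·) :=
  List.isChain_iff_pairwise.1 (h.1.imp fun _ _ h => h.lt)

theorem UpChain.isChain (h : UpChain v l) : IsChain (· ≤ ·) {x | x ∈ l} := by
  have hsorted : l.Pairwise (Relation.SymmGen (· ≤ ·)) := h.pairwise_lt.imp fun h => Or.inl h.le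
  exact fun x hx y hy hne => hsorted.forall hx hy hne

theorem exists_upChain_mem [IsStronglyAtomic α] [WellFoundedGT α] {d : α} (hvd : v ≤ d) :
    ∃ l, UpChain v l ∧ d ∈ l := by
  induction v using WellFoundedGT.induction generalizing d with
  | _ v ih =>
  by_cases hmax : IsMax v
  · obtain rfl := le_antisymm hvd (hmax hvd)
    exact ⟨[v], upChain_singleton_iff.2 ⟨rfl, hmax⟩, List.mem_singleton_self v⟩
  rcases hvd.lt_or_eq with hlt | rfl
  · obtain ⟨u, hvu, hud⟩ := exists_covBy_le_of_lt hlt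
    obtain ⟨l, hl, hdl⟩ := ih u hvu.lt hud
    exact ⟨v :: l, hl.cons hvu, List.mem_cons_of_mem v hdl⟩
  · obtain ⟨w, hvw⟩ := not_isMax_iff.1 hmax
    obtain ⟨u, hvu, -⟩ := exists_covBy_le_of_lt hvw
    obtain ⟨l, hl, -⟩ := ih u hvu.lt le_rfl
    exact ⟨v :: l, hl.cons hvu, List.mem_cons_self⟩

theorem UpChain.eq_of_isChain_Ioi (hv : IsChain (· ≤ ·) (Set.Ioi v)) (h₁ : UpChain v l₁)
    (h₂ : UpChain v l₂) : l₁ = l₂ := by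
  induction l₁ generalizing v l₂ with
  | nil => exact (not_upChain_nil h₁).elim
  | cons a t₁ ih =>
    match t₁, l₂, h₁, h₂ with
    | _, [], _, h₂ => exact (not_upChain_nil h₂).elim
    | [], [b], h₁, h₂ =>
      rw [(upChain_singleton_iff.1 h₁).1, (upChain_singleton_iff.1 h₂).1]
    | [], b :: y :: t₂, h₁, h₂ =>
      exact ((upChain_singleton_iff.1 h₁).2.not_lt (upChain_cons_cons_iff.1 h₂).2.1.lt).elim
    | x :: t₁, [b], h₁, h₂ =>
      exact ((upChain_singleton_iff.1 h₂).2.not_lt (upChain_cons_cons_iff.1 h₁).2.1.lt).elim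
    | x :: t₁, b :: y :: t₂, h₁, h₂ =>
      obtain ⟨rfl, hvx, hx⟩ := upChain_cons_cons_iff.1 h₁
      obtain ⟨rfl, hvy, hy⟩ := upChain_cons_cons_iff.1 h₂
      obtain rfl : x = y := by
        rcases hv.total hvx.lt hvy.lt with hle | hle
        · exact (hvy.eq_or_eq hvx.le hle).resolve_left hvx.lt.ne'
        · exact ((hvx.eq_or_eq hvy.le hle).resolve_left hvy.lt.ne').symm
      rw [ih (hv.mono (Set.Ioi_subset_Ioi hvx.le)) hx hy]

instance [Finite α] : Finite {l : List α // UpChain v l} := by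
  have := Fintype.ofFinite α
  exact Finite.of_injective
    (fun l => (⟨l.1, l.2.pairwise_lt.imp ne_of_lt⟩ : {l : List α // l.Nodup}))
    fun _ _ h => Subtype.ext (Subtype.mk.inj h)

theorem two_le_uc_iff [Finite α] : 2 ≤ uc v ↔ ¬ IsChain (· ≤ ·) (Set.Ioi v) := by
  change 1 < Nat.card _ ↔ _
  rw [Finite.one_lt_card_iff_nontrivial, nontrivial_iff]
  constructor
  · rintro ⟨⟨l₁, h₁⟩, ⟨l₂, h₂⟩, hne⟩ hv
    exact hne (Subtype.ext (h₁.eq_of_isChain_Ioi hv h₂))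
  · rw [not_isChain_iff_exists_incompRel]
    rintro ⟨d, hd, e, he, hde⟩
    obtain ⟨l₁, h₁, hd₁⟩ := exists_upChain_mem hd.le
    obtain ⟨l₂, h₂, he₂⟩ := exists_upChain_mem he.le
    refine ⟨⟨l₁, h₁⟩, ⟨l₂, h₂⟩, fun h => ?_⟩
    obtain rfl : l₁ = l₂ := congrArg Subtype.val h
    exact not_symmGen_iff.2 hde (h₁.isChain hd₁ he₂ hde.ne)

end UpChain

theorem downChain_iff_upChain_toDual [PartialOrder α] {v : α} {l : List α} :
    DownChain v l ↔ UpChain (OrderDual.toDual v) (l.map OrderDual.toDual).reverse := by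
  simp only [DownChain, UpChain, List.Chain', List.isChain_reverse, List.isChain_map,
    List.head?_reverse, List.getLast?_reverse, List.getLast?_map, List.head?_map,
    toDual_covBy_toDual_iff, Option.map_eq_some_iff, OrderDual.exists, isMax_toDual_iff,
    OrderDual.toDual_inj, exists_eq_right]
  exact and_congr_right' and_comm

theorem dc_eq_uc_toDual [PartialOrder α] (v : α) : dc v = uc (OrderDual.toDual v) :=
  Nat.card_congr <| ((Equiv.listEquivOfEquiv OrderDual.toDual).trans
    (List.reverse_involutive.toPerm _)).subtypeEquiv fun _ => downChain_iff_upChain_toDual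

theorem isXCenter_iff [PartialOrder α] {c : α} :
    IsXCenter c ↔ ¬ IsChain (· ≤ ·) (Set.Iio c) ∧ ¬ IsChain (· ≤ ·) (Set.Ioi c) := by
  simp only [not_isChain_iff_exists_incompRel, IsXCenter, IncompRel, Set.mem_Iio, Set.mem_Ioi]
  constructor
  · rintro ⟨a, b, d, e, ha, hb, hd, he, hab, hba, hde, hed⟩
    exact ⟨⟨a, ha, b, hb, hab, hba⟩, d, hd, e, he, hde, hed⟩
  · rintro ⟨⟨a, ha, b, hb, hab, hba⟩, d, hd, e, he, hde, hed⟩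
    exact ⟨a, b, d, e, ha, hb, hd, he, hab, hba, hde, hed⟩

theorem two_le_dc_iff [PartialOrder α] [Finite α] {v : α} :
    2 ≤ dc v ↔ ¬ IsChain (· ≤ ·) (Set.Iio v) := by
  rw [dc_eq_uc_toDual, two_le_uc_iff, isChain_Ioi_toDual_iff]

theorem hasX_iff_uc_dc (α : Type*) [Fintype α] [PartialOrder α] :
    HasX α ↔ ∃ v : α, 2 ≤ uc v ∧ 2 ≤ dc v := by
  simp only [HasX, isXCenter_iff, two_le_uc_iff, two_le_dc_iff, and_comm]
end
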